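/- arXiv:2506.13710 — 7 statements merged into one kernel-verified Lean document; each statement's English description precedes it below -/
import Mathlib

section
/- Let f : ℝⁿ → ℝ be three times differentiable and quasi-self-concordant with parameter M ≥ 0, meaning ∇³f(x)[h,h,u] ≤ M·⟨∇²f(x)h, h⟩·‖u‖ for all x, h, u. Then for all x, h, ‖∇f(x+h) − ∇f(x) − ∇²f(x)h‖ ≤ M·⟨∇²f(x)h,h⟩·φ(M‖h‖), where φ(t) = (eᵗ − t − 1)/t². -/
open scoped RealInnerProductSpace

noncomputable def qscPhi (t : ℝ) : ℝ :=
  if t = 0 then 1 / 2 else (Real.exp t - t - 1) / t ^ 2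

/-!
Restrict `f` to the line `t ↦ x + t • h` and fix a test vector `u`. With `g t = D²f(x+th)[h,h]`
and `w t = D²f(x+th)[h,u]`, quasi-self-concordance says `g' ≤ M‖h‖ g` and `w' ≤ M‖u‖ g`.
Grönwall gives `g t ≤ g 0 exp (M‖h‖ t)`, and integrating this bound twice gives
`⟪∇f(x+h) - ∇f x - ∇²f x h, u⟫ ≤ M‖u‖ g 0 φ(M‖h‖)`; testing against `u` equal to the error
vector itself yields the norm bound.
-/

open Real

lemma le_of_hasDerivAt_le_of_nonneg {F G F' G' : ℝ → ℝ} (hF : ∀ t, HasDerivAt F (F' t) t)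
    (hG : ∀ t, HasDerivAt G (G' t) t) (h0 : F 0 ≤ G 0) (hle : ∀ t, 0 ≤ t → F' t ≤ G' t)
    {t : ℝ} (ht : 0 ≤ t) : F t ≤ G t :=
  image_le_of_deriv_right_le_deriv_boundary
    (fun s _ => (hF s).continuousAt.continuousWithinAt) (fun s _ => (hF s).hasDerivWithinAt) h0
    (fun s _ => (hG s).continuousAt.continuousWithinAt) (fun s _ => (hG s).hasDerivWithinAt)
    (fun s hs => hle s hs.1) ⟨ht, le_rfl⟩

lemma le_mul_exp_of_deriv_le_mul {g g' : ℝ → ℝ} {τ : ℝ} (hg : ∀ t, HasDerivAt g (g' t) t)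
    (hbound : ∀ t, 0 ≤ t → g' t ≤ τ * g t) {t : ℝ} (ht : 0 ≤ t) :
    g t ≤ g 0 * exp (τ * t) := by
  have := le_gronwallBound_of_liminf_deriv_right_le (ε := 0)
    (fun s _ => (hg s).continuousAt.continuousWithinAt)
    (fun s _ _ hr => (hg s).hasDerivWithinAt.liminf_right_slope_le hr) le_rfl
    (fun s hs => by simpa using hbound s hs.1) t ⟨ht, le_rfl⟩
  simpa [gronwallBound_ε0] using this

/-- `expPrimitive τ t = ∫₀ᵗ exp (τ s) ds`. -/
noncomputable def expPrimitive (τ t : ℝ) : ℝ :=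
  if τ = 0 then t else (exp (τ * t) - 1) / τ

lemma hasDerivAt_expPrimitive (τ t : ℝ) : HasDerivAt (expPrimitive τ) (exp (τ * t)) t := by
  rcases eq_or_ne τ 0 with rfl | hτ
  · have : expPrimitive 0 = id := funext fun s => if_pos rfl
    simpa [this] using hasDerivAt_id t
  · have : expPrimitive τ = fun s => (exp (τ * s) - 1) / τ := funext fun s => if_neg hτ
    rw [this]
    exact ((((hasDerivAt_id' t).const_mul τ).exp).sub_const 1).div_const τ
      |>.congr_deriv (by field_simp)

/-- `t ^ 2 * qscPhi (τ * t) = ∫₀ᵗ expPrimitive τ s ds`; the value `qscPhi 0 = 1 / 2` is what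
makes this hold at `τ = 0`. -/
lemma hasDerivAt_sq_mul_qscPhi (τ t : ℝ) :
    HasDerivAt (fun s => s ^ 2 * qscPhi (τ * s)) (expPrimitive τ t) t := by
  rcases eq_or_ne τ 0 with rfl | hτ
  · simp only [zero_mul, qscPhi, if_true, expPrimitive]
    exact (hasDerivAt_pow 2 t).mul_const (1 / 2 : ℝ) |>.congr_deriv (by ring)
  · have : (fun s => s ^ 2 * qscPhi (τ * s)) = fun s => (exp (τ * s) - τ * s - 1) / τ ^ 2 := by
      funext s
      rcases eq_or_ne s 0 with rfl | hs
      · simp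
      · rw [qscPhi, if_neg (mul_ne_zero hτ hs)]
        field_simp
    rw [this, expPrimitive, if_neg hτ]
    exact ((((hasDerivAt_id' t).const_mul τ).exp.sub
      ((hasDerivAt_id' t).const_mul τ)).sub_const 1).div_const (τ ^ 2)
      |>.congr_deriv (by field_simp)

theorem sub_sub_le_mul_qscPhi {g g' w w' p : ℝ → ℝ} {τ c : ℝ} (hc : 0 ≤ c)
    (hg : ∀ t, HasDerivAt g (g' t) t) (hw : ∀ t, HasDerivAt w (w' t) t)
    (hp : ∀ t, HasDerivAt p (w t) t) (hg' : ∀ t, 0 ≤ t → g' t ≤ τ * g t)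
    (hw' : ∀ t, 0 ≤ t → w' t ≤ c * g t) :
    p 1 - p 0 - w 0 ≤ c * g 0 * qscPhi τ := by
  have hw_le : ∀ t, 0 ≤ t → w t ≤ w 0 + c * g 0 * expPrimitive τ t := by
    intro t ht
    refine le_of_hasDerivAt_le_of_nonneg hw
      (fun s => ((hasDerivAt_expPrimitive τ s).const_mul _).const_add _)
      (by simp [expPrimitive]) (fun s hs => ?_) ht
    calc w' s ≤ c * g s := hw' s hs
      _ ≤ c * (g 0 * exp (τ * s)) :=
        mul_le_mul_of_nonneg_left (le_mul_exp_of_deriv_le_mul hg hg' hs) hc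
      _ = c * g 0 * exp (τ * s) := by ring
  have hp_le : p 1 ≤ p 0 + 1 * w 0 + c * g 0 * (1 ^ 2 * qscPhi (τ * 1)) :=
    le_of_hasDerivAt_le_of_nonneg hp
      (fun s => (((hasDerivAt_id s).mul_const (w 0)).const_add (p 0)).add
        ((hasDerivAt_sq_mul_qscPhi τ s).const_mul _))
      (by simp) (fun s hs => by simpa using hw_le s hs) zero_le_one
  simp only [one_mul, one_pow, mul_one] at hp_le
  linarith

lemma norm_le_of_forall_inner_le_mul_norm {E : Type*} [NormedAddCommGroup E]
    [InnerProductSpace ℝ E] [Nontrivial E] {v : E} {C : ℝ} (hv : ∀ u, ⟪v, u⟫ ≤ C * ‖u‖) :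
    ‖v‖ ≤ C := by
  obtain ⟨u, hu⟩ := exists_ne (0 : E)
  have hC : 0 ≤ C := by
    have h₁ := hv u
    have h₂ := hv (-u)
    rw [inner_neg_right, norm_neg] at h₂
    exact nonneg_of_mul_nonneg_left (by linarith) (norm_pos_iff.2 hu)
  rcases eq_or_ne v 0 with rfl | hv₀
  · simpa using hC
  · have := hv v
    rw [real_inner_self_eq_norm_sq, sq] at this
    exact le_of_mul_le_mul_right this (norm_pos_iff.2 hv₀)

lemma hasDerivAt_iteratedFDeriv_comp_line {E F : Type*} [NormedAddCommGroup E] [NormedSpace ℝ E]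
    [NormedAddCommGroup F] [NormedSpace ℝ F] {f : E → F} {k : ℕ} {x h : E} {t : ℝ}
    (hf : DifferentiableAt ℝ (iteratedFDeriv ℝ k f) (x + t • h)) (m : Fin k → E) :
    HasDerivAt (fun s : ℝ => iteratedFDeriv ℝ k f (x + s • h) m)
      (iteratedFDeriv ℝ (k + 1) f (x + t • h) (Fin.cons h m)) t := by
  have hline : HasDerivAt (fun s : ℝ => x + s • h) h t := by
    simpa using ((hasDerivAt_id t).smul_const h).const_add x
  exact (ContinuousMultilinearMap.apply ℝ _ F m).hasFDerivAt.comp_hasDerivAt t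
    (hf.hasFDerivAt.comp_hasDerivAt t hline)

section Gradient

variable {E : Type*} [NormedAddCommGroup E] [InnerProductSpace ℝ E] [CompleteSpace E]

lemma inner_gradient_eq_iteratedFDeriv_one (f : E → ℝ) (y u : E) :
    ⟪gradient f y, u⟫ = iteratedFDeriv ℝ 1 f y ![u] := by
  rw [inner_gradient_left, iteratedFDeriv_one_apply]
  rfl

lemma inner_fderiv_gradient_eq_iteratedFDeriv_two (f : E → ℝ) (y h u : E) :
    ⟪fderiv ℝ (gradient f) y h, u⟫ = iteratedFDeriv ℝ 2 f y ![h, u] := by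
  have hg : gradient f = ⇑(InnerProductSpace.toDual ℝ E).symm ∘ fderiv ℝ f := rfl
  rw [iteratedFDeriv_two_apply, hg, LinearIsometryEquiv.comp_fderiv]
  exact InnerProductSpace.toDual_symm_apply

end Gradient

theorem quasi_self_concordant_gradient_approx_general {n : ℕ}
    (f : EuclideanSpace ℝ (Fin n) → ℝ) (M : ℝ) (hM : 0 ≤ M)
    (hf : ContDiff ℝ 3 f)
    (hqsc : ∀ x h u : EuclideanSpace ℝ (Fin n),
      iteratedFDeriv ℝ 3 f x ![h, h, u]
        ≤ M * ⟪fderiv ℝ (gradient f) x h, h⟫ * ‖u‖) :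
    ∀ x h : EuclideanSpace ℝ (Fin n),
      ‖gradient f (x + h) - gradient f x - fderiv ℝ (gradient f) x h‖
        ≤ M * ⟪fderiv ℝ (gradient f) x h, h⟫ * qscPhi (M * ‖h‖) := by
  intro x h
  rcases eq_or_ne h 0 with rfl | hh
  · simp
  have : Nontrivial (EuclideanSpace ℝ (Fin n)) := nontrivial_of_ne h 0 hh
  have hD (k : ℕ) (hk : k < 3) y : DifferentiableAt ℝ (iteratedFDeriv ℝ k f) y :=
    (hf.iteratedFDeriv_right (m := 1) (by norm_cast; omega)).differentiable one_ne_zero y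
  simp only [inner_fderiv_gradient_eq_iteratedFDeriv_two] at hqsc
  refine norm_le_of_forall_inner_le_mul_norm fun u => ?_
  have key := sub_sub_le_mul_qscPhi (mul_nonneg hM (norm_nonneg u)) (τ := M * ‖h‖)
    (fun t => hasDerivAt_iteratedFDeriv_comp_line (hD 2 (by norm_num) (x + t • h)) ![h, h])
    (fun t => hasDerivAt_iteratedFDeriv_comp_line (hD 2 (by norm_num) (x + t • h)) ![h, u])
    (fun t => hasDerivAt_iteratedFDeriv_comp_line (hD 1 (by norm_num) (x + t • h)) ![u])
    (fun t _ => (hqsc _ h h).trans_eq (by ring)) (fun t _ => (hqsc _ h u).trans_eq (by ring))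
  simp only [inner_sub_left, inner_gradient_eq_iteratedFDeriv_one,
    inner_fderiv_gradient_eq_iteratedFDeriv_two, zero_smul, add_zero, one_smul] at key ⊢
  linarith

theorem quasi_self_concordant_gradient_approx {n : ℕ}
    (f : EuclideanSpace ℝ (Fin n) → ℝ) (M : ℝ) (hM : 0 ≤ M)
    (hf : ContDiff ℝ 3 f) (hconv : ConvexOn ℝ Set.univ f)
    (hqsc : ∀ x h u : EuclideanSpace ℝ (Fin n),
      iteratedFDeriv ℝ 3 f x ![h, h, u]
        ≤ M * ⟪fderiv ℝ (gradient f) x h, h⟫ * ‖u‖) :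
    ∀ x h : EuclideanSpace ℝ (Fin n),
      ‖gradient f (x + h) - gradient f x - fderiv ℝ (gradient f) x h‖
        ≤ M * ⟪fderiv ℝ (gradient f) x h, h⟫ * qscPhi (M * ‖h‖) :=
  quasi_self_concordant_gradient_approx_general f M hM hf hqsc
end

section
/- Let H be a symmetric positive semidefinite n×n matrix, g ∈ ℝⁿ a nonzero vector, γ > 0, B a symmetric positive definite matrix defining the norm ‖h‖² = ⟨Bh,h⟩, and let x⁺ := x − (H + (‖g‖_*/γ)B)^{-1} g, where ‖g‖_* = ⟨g, B^{-1}g⟩^{1/2}. Then ⟨g, x − x⁺⟩ > 0 and ‖x⁺ − x‖ ≤ γ. -/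
open Matrix

noncomputable def normB {n : ℕ} (B : Matrix (Fin n) (Fin n) ℝ) (h : Fin n → ℝ) : ℝ :=
  Real.sqrt (h ⬝ᵥ B *ᵥ h)

noncomputable def dualNormB {n : ℕ} (B : Matrix (Fin n) (Fin n) ℝ) (s : Fin n → ℝ) : ℝ :=
  Real.sqrt (s ⬝ᵥ B⁻¹ *ᵥ s)

/-! With `h = (H + λB)⁻¹ g` and `λ > 0`, the matrix `H + λB` is positive definite, so
`⟪g, h⟫ = ⟪(H + λB) h, h⟫ > 0`. Dropping the `H`-term gives `λ ‖h‖² ≤ ⟪g, h⟫`, and the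
Cauchy–Schwarz inequality in the `B`-geometry gives `⟪g, h⟫ ≤ ‖g‖_* ‖h‖`; hence
`‖h‖ ≤ ‖g‖_* / λ`, which is `γ` for the choice `λ = ‖g‖_* / γ`. -/

namespace Matrix

variable {ι : Type*} [Fintype ι]

theorem PosSemidef.dotProduct_mulVec_sq_le {B : Matrix ι ι ℝ} (hB : B.PosSemidef)
    (u v : ι → ℝ) : (u ⬝ᵥ B *ᵥ v) ^ 2 ≤ (u ⬝ᵥ B *ᵥ u) * (v ⬝ᵥ B *ᵥ v) := by
  let := B.toSeminormedAddCommGroup hB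
  let := B.toInnerProductSpace hB
  -- `⟪u, v⟫` for the inner product induced by `B` is definitionally `(B *ᵥ v) ⬝ᵥ star u`
  have key : ((B *ᵥ v) ⬝ᵥ star u) * ((B *ᵥ v) ⬝ᵥ star u)
      ≤ ((B *ᵥ u) ⬝ᵥ star u) * ((B *ᵥ v) ⬝ᵥ star v) := real_inner_mul_inner_self_le u v
  simpa only [star_trivial, dotProduct_comm _ u, dotProduct_comm _ v, sq] using key

theorem IsHermitian.dotProduct_mulVec_comm {B : Matrix ι ι ℝ} (hB : B.IsHermitian)
    (u v : ι → ℝ) : u ⬝ᵥ B *ᵥ v = v ⬝ᵥ B *ᵥ u := by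
  rw [dotProduct_mulVec, ← mulVec_transpose, ← conjTranspose_eq_transpose_of_trivial, hB.eq,
    dotProduct_comm]

theorem PosDef.mulVec_inv_mulVec [DecidableEq ι] {M : Matrix ι ι ℝ} (hM : M.PosDef)
    (v : ι → ℝ) : M *ᵥ M⁻¹ *ᵥ v = v := by
  rw [mulVec_mulVec, mul_nonsing_inv _ ((isUnit_iff_isUnit_det M).mp hM.isUnit), one_mulVec]

end Matrix

section NormB

variable {n : ℕ} {B : Matrix (Fin n) (Fin n) ℝ}

theorem normB_neg (h : Fin n → ℝ) : normB B (-h) = normB B h := by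
  simp only [normB, mulVec_neg, dotProduct_neg, neg_dotProduct, neg_neg]

theorem normB_sq (hB : B.PosSemidef) (h : Fin n → ℝ) : normB B h ^ 2 = h ⬝ᵥ B *ᵥ h :=
  Real.sq_sqrt (hB.dotProduct_mulVec_nonneg h)

theorem dualNormB_pos (hB : B.PosDef) {s : Fin n → ℝ} (hs : s ≠ 0) : 0 < dualNormB B s :=
  Real.sqrt_pos.mpr (hB.inv.dotProduct_mulVec_pos hs)

theorem dotProduct_le_dualNormB_mul_normB (hB : B.PosDef) (s h : Fin n → ℝ) :
    s ⬝ᵥ h ≤ dualNormB B s * normB B h := by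
  set u := B⁻¹ *ᵥ s
  have hs : s ⬝ᵥ h = u ⬝ᵥ B *ᵥ h := by
    rw [hB.isHermitian.dotProduct_mulVec_comm, hB.mulVec_inv_mulVec, dotProduct_comm]
  have hu : u ⬝ᵥ B *ᵥ u = s ⬝ᵥ B⁻¹ *ᵥ s := by
    rw [hB.mulVec_inv_mulVec, dotProduct_comm]
  have hu_nonneg : 0 ≤ u ⬝ᵥ B *ᵥ u := hB.posSemidef.dotProduct_mulVec_nonneg u
  rw [hs, dualNormB, normB, ← hu, ← Real.sqrt_mul hu_nonneg]
  exact Real.le_sqrt_of_sq_le (hB.posSemidef.dotProduct_mulVec_sq_le u h)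

variable {H : Matrix (Fin n) (Fin n) ℝ}

theorem mul_normB_sq_le_dotProduct_inv_mulVec (hH : H.PosSemidef) (hB : B.PosDef)
    {t : ℝ} (ht : 0 < t) (g : Fin n → ℝ) :
    t * normB B ((H + t • B)⁻¹ *ᵥ g) ^ 2 ≤ g ⬝ᵥ (H + t • B)⁻¹ *ᵥ g := by
  set h := (H + t • B)⁻¹ *ᵥ g
  have hg : g = (H + t • B) *ᵥ h :=
    ((PosDef.posSemidef_add hH (hB.smul ht)).mulVec_inv_mulVec g).symm
  have hHh : 0 ≤ h ⬝ᵥ H *ᵥ h := hH.dotProduct_mulVec_nonneg h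
  calc t * normB B h ^ 2 ≤ h ⬝ᵥ H *ᵥ h + t * (h ⬝ᵥ B *ᵥ h) := by
        rw [normB_sq hB.posSemidef]; linarith
    _ = g ⬝ᵥ h := by
        rw [hg, add_mulVec, smul_mulVec, add_dotProduct, smul_dotProduct, smul_eq_mul,
          dotProduct_comm (H *ᵥ h), dotProduct_comm (B *ᵥ h)]

theorem normB_inv_mulVec_le (hH : H.PosSemidef) (hB : B.PosDef) {t : ℝ} (ht : 0 < t)
    (g : Fin n → ℝ) : normB B ((H + t • B)⁻¹ *ᵥ g) ≤ dualNormB B g / t := by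
  set h := (H + t • B)⁻¹ *ᵥ g
  rw [le_div_iff₀ ht]
  have hN : 0 ≤ normB B h := Real.sqrt_nonneg _
  have hr : 0 ≤ dualNormB B g := Real.sqrt_nonneg _
  have := (mul_normB_sq_le_dotProduct_inv_mulVec hH hB ht g).trans
    (dotProduct_le_dualNormB_mul_normB hB g h)
  nlinarith

end NormB

theorem regularized_newton_step_basic {n : ℕ}
    (H B : Matrix (Fin n) (Fin n) ℝ) (hH : H.PosSemidef) (hB : B.PosDef)
    (x g : Fin n → ℝ) (hg : g ≠ 0) (γ : ℝ) (hγ : 0 < γ)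
    (xp : Fin n → ℝ)
    (hxp : xp = x - (H + (dualNormB B g / γ) • B)⁻¹ *ᵥ g) :
    0 < g ⬝ᵥ (x - xp) ∧ normB B (xp - x) ≤ γ := by
  have hr := dualNormB_pos hB hg
  have ht : 0 < dualNormB B g / γ := div_pos hr hγ
  subst hxp
  rw [sub_sub_cancel, sub_sub_cancel_left, normB_neg]
  refine ⟨(PosDef.posSemidef_add hH (hB.smul ht)).inv.dotProduct_mulVec_pos hg, ?_⟩
  calc _ ≤ dualNormB B g / (dualNormB B g / γ) := normB_inv_mulVec_le hH hB ht g
    _ = γ := div_div_cancel₀ hr.ne'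
end

section
/- Let {F_k}_{k≥0} and {g_k}_{k≥0} be positive sequences with F_k nonincreasing, and suppose for each k, F_k − F_{k+1} ≥ (γ_⋆ε/8)·g_{k+1}/g_k where γ_⋆, ε > 0 and g_k ≥ ε for all k ≤ K. Then K ≤ 8F_0/(γ_⋆ε) + log(g_0/ε). -/
theorem nonconvex_complexity_bound (F g : ℕ → ℝ) (K : ℕ)
    (γstar ε : ℝ) (hγ : 0 < γstar) (hε : 0 < ε)
    (hFpos : ∀ k, 0 < F k) (hgpos : ∀ k, 0 < g k)
    (hmono : ∀ k, F (k + 1) ≤ F k)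
    (hprog : ∀ k, F k - F (k + 1) ≥ γstar * ε / 8 * (g (k + 1) / g k))
    (hglarge : ∀ k ≤ K, g k ≥ ε) :
    (K : ℝ) ≤ 8 * F 0 / (γstar * ε) + Real.log (g 0 / ε) := by
  set c := γstar * ε / 8 with hc
  have hcpos : 0 < c := by positivity
  -- telescoping the progress bound
  have hsum : ∑ i ∈ Finset.range K, c * (g (i + 1) / g i) ≤ F 0 - F K := by
    have := Finset.sum_range_sub (fun i => -F i) K
    have hle : ∑ i ∈ Finset.range K, c * (g (i + 1) / g i)
        ≤ ∑ i ∈ Finset.range K, (F i - F (i + 1)) :=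
      Finset.sum_le_sum fun i _ => hprog i
    have hts : ∑ i ∈ Finset.range K, (F i - F (i + 1)) = F 0 - F K := by
      have := Finset.sum_range_sub' F K
      simpa using this
    linarith
  -- 1 + log x ≤ x
  have hlog : ∀ i ∈ Finset.range K,
      c * (1 + (Real.log (g (i + 1)) - Real.log (g i))) ≤ c * (g (i + 1) / g i) := by
    intro i _
    have hx : 0 < g (i + 1) / g i := div_pos (hgpos _) (hgpos _)
    have := Real.log_le_sub_one_of_pos hx
    rw [Real.log_div (hgpos (i+1)).ne' (hgpos i).ne'] at this
    nlinarith
  have hsum2 : ∑ i ∈ Finset.range K, c * (1 + (Real.log (g (i + 1)) - Real.log (g i)))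
      ≤ F 0 - F K := le_trans (Finset.sum_le_sum hlog) hsum
  have hts2 : ∑ i ∈ Finset.range K, c * (1 + (Real.log (g (i + 1)) - Real.log (g i)))
      = c * (K + (Real.log (g K) - Real.log (g 0))) := by
    rw [← Finset.mul_sum, Finset.sum_add_distrib, Finset.sum_const, Finset.card_range,
      Finset.sum_range_sub (fun i => Real.log (g i))]
    push_cast
    ring
  rw [hts2] at hsum2
  have hKlog : Real.log ε ≤ Real.log (g K) :=
    Real.log_le_log hε (hglarge K le_rfl)
  have hFK : 0 < F K := hFpos K
  have key : c * ((K : ℝ) + Real.log ε - Real.log (g 0)) ≤ F 0 := by nlinarith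
  have hKle : (K : ℝ) ≤ F 0 / c + Real.log (g 0) - Real.log ε := by
    have h := (le_div_iff₀ hcpos).mpr
      (show ((K : ℝ) + Real.log ε - Real.log (g 0)) * c ≤ F 0 by nlinarith)
    linarith
  have : F 0 / c = 8 * F 0 / (γstar * ε) := by
    rw [hc]; field_simp
  rw [Real.log_div (hgpos 0).ne' hε.ne']
  linarith
end

section
/- Let f : ℝⁿ → ℝ satisfy ‖∇²f(x)‖ ≤ L₀ + L₁‖∇f(x)‖ for all x (the (L₀,L₁)-smoothness condition), and let γ := ‖g‖ / ((L₀ + L₁‖∇f(x)‖)·(1 + exp(‖g‖/‖∇f(x)‖))) for a given vector g ≠ 0 and point x with ∇f(x) ≠ 0. Then for all h with ‖h‖ ≤ γ, ‖∇f(x+h) − ∇f(x) − ∇²f(x)h‖ ≤ ‖g‖·‖h‖/γ. -/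
/-!
Write `G = ∇f` and `A = L₀ + L₁‖G x‖`. Along `t ↦ x + t • h`, the smoothness condition is a linear
differential inequality for `‖G‖`, so Grönwall gives `‖DG(x + h)‖ ≤ A e^{L₁‖h‖}`. The mean value
inequality applied to `G - DG(x)` then bounds the Taylor remainder by `A (1 + e^{L₁‖h‖}) ‖h‖`, and
`‖h‖ ≤ γ` forces `L₁‖h‖ ≤ ‖g‖ / ‖G x‖`, which turns this constant into `‖g‖ / γ`.
-/

open scoped RealInnerProductSpace

theorem ContDiff.differentiable_gradient {F : Type*} [NormedAddCommGroup F]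
    [InnerProductSpace ℝ F] [CompleteSpace F] {f : F → ℝ} (hf : ContDiff ℝ 2 f) :
    Differentiable ℝ (gradient f) :=
  (InnerProductSpace.toDual ℝ F).symm.differentiable.comp
    ((hf.fderiv_right (by norm_num)).differentiable one_ne_zero)

section SmoothnessAlongSegments

variable {E F : Type*} [NormedAddCommGroup E] [NormedSpace ℝ E]
  [NormedAddCommGroup F] [NormedSpace ℝ F] {G : E → F} {L₀ L₁ : ℝ}

theorem add_mul_norm_le_mul_exp_of_norm_fderiv_le (hG : Differentiable ℝ G) (hL₁ : 0 < L₁)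
    (hbound : ∀ y, ‖fderiv ℝ G y‖ ≤ L₀ + L₁ * ‖G y‖) (x h : E) :
    L₀ + L₁ * ‖G (x + h)‖ ≤ (L₀ + L₁ * ‖G x‖) * Real.exp (L₁ * ‖h‖) := by
  rcases eq_or_ne h 0 with rfl | hh
  · simp
  have hK : L₁ * ‖h‖ ≠ 0 := by positivity
  have hline : ∀ t : ℝ, HasDerivAt (fun t : ℝ => G (x + t • h)) (fderiv ℝ G (x + t • h) h) t :=
    fun t => (hG _).hasFDerivAt.comp_hasDerivAt t
      (((hasDerivAt_id t).smul_const h).const_add x |>.congr_deriv (one_smul ℝ h))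
  have hgronwall := norm_le_gronwallBound_of_norm_deriv_right_le (a := 0) (b := 1)
    (δ := ‖G x‖) (K := L₁ * ‖h‖) (ε := L₀ * ‖h‖)
    (fun t _ => (hline t).continuousAt.continuousWithinAt)
    (fun t _ => (hline t).hasDerivWithinAt) (by simp)
    (fun t _ => calc
      ‖fderiv ℝ G (x + t • h) h‖ ≤ ‖fderiv ℝ G (x + t • h)‖ * ‖h‖ :=
          ContinuousLinearMap.le_opNorm _ _
      _ ≤ (L₀ + L₁ * ‖G (x + t • h)‖) * ‖h‖ := by gcongr; exact hbound _
      _ = L₁ * ‖h‖ * ‖G (x + t • h)‖ + L₀ * ‖h‖ := by ring)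
    1 (Set.right_mem_Icc.2 zero_le_one)
  simp only [gronwallBound_of_K_ne_0 hK, one_smul, sub_zero, mul_one] at hgronwall
  calc L₀ + L₁ * ‖G (x + h)‖
      ≤ L₀ + L₁ * (‖G x‖ * Real.exp (L₁ * ‖h‖)
          + L₀ * ‖h‖ / (L₁ * ‖h‖) * (Real.exp (L₁ * ‖h‖) - 1)) := by gcongr
    _ = (L₀ + L₁ * ‖G x‖) * Real.exp (L₁ * ‖h‖) := by field_simp; ring

theorem norm_fderiv_add_le_mul_exp (hG : Differentiable ℝ G) (hL₁ : 0 < L₁)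
    (hbound : ∀ y, ‖fderiv ℝ G y‖ ≤ L₀ + L₁ * ‖G y‖) (x h : E) :
    ‖fderiv ℝ G (x + h)‖ ≤ (L₀ + L₁ * ‖G x‖) * Real.exp (L₁ * ‖h‖) :=
  (hbound _).trans (add_mul_norm_le_mul_exp_of_norm_fderiv_le hG hL₁ hbound x h)

theorem norm_sub_sub_fderiv_le_of_norm_fderiv_le (hG : Differentiable ℝ G) (hL₁ : 0 < L₁)
    (hbound : ∀ y, ‖fderiv ℝ G y‖ ≤ L₀ + L₁ * ‖G y‖) (x h : E) :
    ‖G (x + h) - G x - fderiv ℝ G x h‖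
      ≤ (L₀ + L₁ * ‖G x‖) * (1 + Real.exp (L₁ * ‖h‖)) * ‖h‖ := by
  set A := L₀ + L₁ * ‖G x‖
  have hA : ‖fderiv ℝ G x‖ ≤ A := hbound x
  have hderiv : ∀ y ∈ Metric.closedBall x ‖h‖,
      ‖fderiv ℝ G y - fderiv ℝ G x‖ ≤ A * (1 + Real.exp (L₁ * ‖h‖)) := by
    intro y hy
    have hy' : ‖fderiv ℝ G y‖ ≤ A * Real.exp (L₁ * ‖h‖) := by
      calc ‖fderiv ℝ G y‖ = ‖fderiv ℝ G (x + (y - x))‖ := by rw [add_sub_cancel]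
        _ ≤ A * Real.exp (L₁ * ‖y - x‖) := norm_fderiv_add_le_mul_exp hG hL₁ hbound x (y - x)
        _ ≤ A * Real.exp (L₁ * ‖h‖) := by
          have : ‖y - x‖ ≤ ‖h‖ := by simpa [dist_eq_norm] using hy
          gcongr
          exact (norm_nonneg _).trans hA
    calc ‖fderiv ℝ G y - fderiv ℝ G x‖ ≤ ‖fderiv ℝ G y‖ + ‖fderiv ℝ G x‖ := norm_sub_le _ _
      _ ≤ A * (1 + Real.exp (L₁ * ‖h‖)) := by linarith
  simpa using (convex_closedBall x ‖h‖).norm_image_sub_le_of_norm_fderiv_le'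
    (fun y _ => hG y) hderiv (Metric.mem_closedBall_self (norm_nonneg h))
    (by simp : x + h ∈ Metric.closedBall x ‖h‖)

end SmoothnessAlongSegments

theorem L0L1_smooth_gradient_normalized_smoothness {n : ℕ}
    (f : EuclideanSpace ℝ (Fin n) → ℝ) (hf : ContDiff ℝ 2 f)
    (L₀ L₁ : ℝ) (hL₀ : 0 < L₀) (hL₁ : 0 < L₁)
    (hsmooth : ∀ x : EuclideanSpace ℝ (Fin n),
      ‖fderiv ℝ (gradient f) x‖ ≤ L₀ + L₁ * ‖gradient f x‖)
    (x g : EuclideanSpace ℝ (Fin n)) (hg : g ≠ 0) (hgx : gradient f x ≠ 0)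
    (γ : ℝ)
    (hγ : γ = ‖g‖ / ((L₀ + L₁ * ‖gradient f x‖) *
        (1 + Real.exp (‖g‖ / ‖gradient f x‖)))) :
    ∀ h : EuclideanSpace ℝ (Fin n), ‖h‖ ≤ γ →
      ‖gradient f (x + h) - gradient f x - fderiv ℝ (gradient f) x h‖
        ≤ ‖g‖ * ‖h‖ / γ := by
  intro h hh
  set A := L₀ + L₁ * ‖gradient f x‖
  set s := ‖g‖ / ‖gradient f x‖
  have hg' : 0 < ‖g‖ := norm_pos_iff.2 hg
  have hgx' : 0 < ‖gradient f x‖ := norm_pos_iff.2 hgx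
  have hA : 0 < A := by positivity
  have hγpos : 0 < γ := hγ ▸ by positivity
  have hstep : L₁ * ‖h‖ ≤ s := by
    have : L₁ * γ ≤ s := by
      rw [hγ, mul_div_assoc', div_le_div_iff₀ (by positivity) hgx']
      nlinarith [Real.exp_pos s, mul_pos hg' hA]
    nlinarith
  calc ‖gradient f (x + h) - gradient f x - fderiv ℝ (gradient f) x h‖
      ≤ A * (1 + Real.exp (L₁ * ‖h‖)) * ‖h‖ :=
        norm_sub_sub_fderiv_le_of_norm_fderiv_le hf.differentiable_gradient hL₁ hsmooth x h
    _ ≤ A * (1 + Real.exp s) * ‖h‖ := by gcongr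
    _ = ‖g‖ * ‖h‖ / γ := by rw [hγ]; field_simp
end

section
/- Let f : ℝⁿ → ℝ satisfy ‖∇²f(x) − ∇²f(y)‖ ≤ (M₀ + M₁‖∇f(x)‖)·‖x−y‖ for all x, y, and fix x, g ∈ ℝⁿ with g ≠ 0. Set γ := (2‖g‖/(M₀ + M₁‖∇f(x)‖))^{1/2}. Then for all h with ‖h‖ ≤ γ, ‖∇f(x+h) − ∇f(x) − ∇²f(x)h‖ ≤ ‖g‖·‖h‖/γ. -/
open scoped RealInnerProductSpace

/-! Along the segment `t ↦ x + t • h` the remainder `∇f(x + t h) − ∇f(x) − t ∇²f(x) h` starts at `0`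
and has derivative of norm at most `L t ‖h‖²`, where `L = M₀ + M₁ ‖∇f(x)‖`; comparing it with
`L t² ‖h‖² / 2` bounds it by `L ‖h‖² / 2`. Since `L γ² = 2 ‖g‖`, for `‖h‖ ≤ γ` this is at most
`L γ ‖h‖ / 2 = ‖g‖ ‖h‖ / γ`. -/

theorem ContDiff.gradient {F : Type*} [NormedAddCommGroup F] [InnerProductSpace ℝ F]
    [CompleteSpace F] {f : F → ℝ} {n : WithTop ℕ∞} (hf : ContDiff ℝ (n + 1) f) :
    ContDiff ℝ n (gradient f) :=
  (InnerProductSpace.toDual ℝ F).symm.contDiff.comp (hf.fderiv_right le_rfl)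

theorem norm_add_sub_sub_fderiv_apply_le {E F : Type*} [NormedAddCommGroup E] [NormedSpace ℝ E]
    [NormedAddCommGroup F] [NormedSpace ℝ F] {u : E → F} (hu : Differentiable ℝ u) {x : E}
    {L : ℝ} (hL : ∀ y, ‖fderiv ℝ u y - fderiv ℝ u x‖ ≤ L * ‖y - x‖) (h : E) :
    ‖u (x + h) - u x - fderiv ℝ u x h‖ ≤ L / 2 * ‖h‖ ^ 2 := by
  set φ : ℝ → F := fun t => u (x + t • h) - u x - t • fderiv ℝ u x h
  have hφ : ∀ t, HasDerivAt φ (fderiv ℝ u (x + t • h) h - fderiv ℝ u x h) t := by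
    intro t
    have hline : HasDerivAt (fun s : ℝ => x + s • h) h t := by
      simpa using ((hasDerivAt_id t).smul_const h).const_add x
    have := (((hu _).hasFDerivAt.comp_hasDerivAt t hline).sub_const (u x)).sub
      ((hasDerivAt_id t).smul_const (fderiv ℝ u x h))
    rwa [one_smul] at this
  have hB : ∀ t, HasDerivAt (fun s : ℝ => L / 2 * ‖h‖ ^ 2 * s ^ 2) (L * ‖h‖ ^ 2 * t) t :=
    fun t => ((hasDerivAt_pow 2 t).const_mul _).congr_deriv (by push_cast; ring)
  have hbound : ∀ t ∈ Set.Ico (0 : ℝ) 1,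
      ‖fderiv ℝ u (x + t • h) h - fderiv ℝ u x h‖ ≤ L * ‖h‖ ^ 2 * t := by
    rintro t ⟨ht, -⟩
    calc ‖fderiv ℝ u (x + t • h) h - fderiv ℝ u x h‖
        = ‖(fderiv ℝ u (x + t • h) - fderiv ℝ u x) h‖ := rfl
      _ ≤ ‖fderiv ℝ u (x + t • h) - fderiv ℝ u x‖ * ‖h‖ := ContinuousLinearMap.le_opNorm _ _
      _ ≤ L * ‖t • h‖ * ‖h‖ := by gcongr; simpa using hL (x + t • h)
      _ = L * ‖h‖ ^ 2 * t := by rw [norm_smul, Real.norm_of_nonneg ht]; ring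
  simpa [φ] using image_norm_le_of_norm_deriv_right_le_deriv_boundary
    (fun t _ => (hφ t).continuousAt.continuousWithinAt) (fun t _ => (hφ t).hasDerivWithinAt)
    (by simp [φ]) hB hbound (Set.right_mem_Icc.2 zero_le_one)

theorem half_mul_sq_le_mul_div_sqrt {c L r : ℝ} (hc : 0 ≤ c) (hr : 0 ≤ r)
    (hrγ : r ≤ √(2 * c / L)) : L / 2 * r ^ 2 ≤ c * r / √(2 * c / L) := by
  rcases hr.eq_or_lt with rfl | hr
  · simp
  have hcL : 0 < 2 * c / L := Real.sqrt_pos.1 (hr.trans_le hrγ)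
  set γ := √(2 * c / L)
  have hγ : 0 < γ := hr.trans_le hrγ
  have hL : 0 < L := by
    by_contra! hL
    exact hcL.not_ge (div_nonpos_of_nonneg_of_nonpos (by positivity) hL)
  have hc_eq : c = L / 2 * γ ^ 2 := by
    rw [Real.sq_sqrt hcL.le]; field_simp
  rw [le_div_iff₀ hγ, hc_eq]
  have := mul_le_mul_of_nonneg_left hrγ (by positivity : 0 ≤ L / 2 * r)
  nlinarith

theorem M0M1_smooth_gradient_normalized_smoothness_general {n : ℕ}
    (f : EuclideanSpace ℝ (Fin n) → ℝ) (hf : ContDiff ℝ 2 f)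
    (M₀ M₁ : ℝ)
    (hsmooth : ∀ x y : EuclideanSpace ℝ (Fin n),
      ‖fderiv ℝ (gradient f) x - fderiv ℝ (gradient f) y‖
        ≤ (M₀ + M₁ * ‖gradient f x‖) * ‖x - y‖)
    (x g : EuclideanSpace ℝ (Fin n))
    (γ : ℝ)
    (hγ : γ = (2 * ‖g‖ / (M₀ + M₁ * ‖gradient f x‖)) ^ ((1 : ℝ) / 2)) :
    ∀ h : EuclideanSpace ℝ (Fin n), ‖h‖ ≤ γ →
      ‖gradient f (x + h) - gradient f x - fderiv ℝ (gradient f) x h‖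
        ≤ ‖g‖ * ‖h‖ / γ := by
  intro h hh
  rw [← Real.sqrt_eq_rpow] at hγ
  subst hγ
  have hdiff : Differentiable ℝ (gradient f) :=
    (ContDiff.gradient (n := 1) hf).differentiable one_ne_zero
  have hlip : ∀ y, ‖fderiv ℝ (gradient f) y - fderiv ℝ (gradient f) x‖
      ≤ (M₀ + M₁ * ‖gradient f x‖) * ‖y - x‖ := fun y => by
    simpa only [norm_sub_rev] using hsmooth x y
  exact (norm_add_sub_sub_fderiv_apply_le hdiff hlip h).trans
    (half_mul_sq_le_mul_div_sqrt (norm_nonneg g) (norm_nonneg h) hh)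

theorem M0M1_smooth_gradient_normalized_smoothness {n : ℕ}
    (f : EuclideanSpace ℝ (Fin n) → ℝ) (hf : ContDiff ℝ 2 f)
    (M₀ M₁ : ℝ) (hM₀ : 0 < M₀) (hM₁ : 0 < M₁)
    (hsmooth : ∀ x y : EuclideanSpace ℝ (Fin n),
      ‖fderiv ℝ (gradient f) x - fderiv ℝ (gradient f) y‖
        ≤ (M₀ + M₁ * ‖gradient f x‖) * ‖x - y‖)
    (x g : EuclideanSpace ℝ (Fin n)) (hg : g ≠ 0)
    (γ : ℝ)
    (hγ : γ = (2 * ‖g‖ / (M₀ + M₁ * ‖gradient f x‖)) ^ ((1 : ℝ) / 2)) :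
    ∀ h : EuclideanSpace ℝ (Fin n), ‖h‖ ≤ γ →
      ‖gradient f (x + h) - gradient f x - fderiv ℝ (gradient f) x h‖
        ≤ ‖g‖ * ‖h‖ / γ :=
  M0M1_smooth_gradient_normalized_smoothness_general f hf M₀ M₁ hsmooth x g γ hγ
end

section
/- Let f : ℝⁿ → ℝ be convex and C³ with Lipschitz-type bound on the third derivative variation: ‖∇³f(x) − ∇³f(y)‖ ≤ L‖x−y‖^ν for all x, y, with ν ∈ [0,1]. Then for all x, h, u ∈ ℝⁿ: |∇³f(x)[h,h,u]| ≤ 2·(L/(1+ν))^{1/(1+ν)}·⟨∇²f(x)h,h⟩^{ν/(1+ν)}·‖h‖^{2/(1+ν)}·‖u‖. -/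
/-!
Fix `h` and put `φ y = ∇²f(y)[h,h]`. Convexity gives `φ ≥ 0`, and `∇φ(y) = ∇³f(y)[·,h,h]` is
`ν`-Hölder with constant `L‖h‖²`. A nonnegative function with `ν`-Hölder gradient (constant `M`)
satisfies `‖∇φ(x)‖ ≤ 2 (M/(1+ν))^{1/(1+ν)} φ(x)^{ν/(1+ν)}`: along a line, Taylor's bound gives
`0 ≤ φ(x + tv) ≤ φ(x) + t ∇φ(x)v + M‖v‖^{1+ν} t^{1+ν}/(1+ν)` for `t ≥ 0`, and one optimizes in `t`.
By the symmetry of `∇³f`, `∇³f(x)[h,h,u] = ∇φ(x) u`.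
-/

open scoped RealInnerProductSpace

open Set Filter Topology

theorem sub_sub_mul_le_of_deriv_sub_le_rpow {g g' : ℝ → ℝ} {M ν s : ℝ} (hν : 0 ≤ ν)
    (hg : ∀ t ≥ 0, HasDerivAt g (g' t) t) (hg' : ∀ t ≥ 0, g' t - g' 0 ≤ M * t ^ ν)
    (hs : 0 ≤ s) :
    g s - g 0 - s * g' 0 ≤ M * s ^ (1 + ν) / (1 + ν) := by
  have h1ν : 1 + ν ≠ 0 := by positivity
  have hB : ∀ t, HasDerivAt (fun t => M * t ^ (1 + ν) / (1 + ν)) (M * t ^ ν) t := fun t => by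
    refine (((Real.hasDerivAt_rpow_const (p := 1 + ν) (Or.inr (by linarith))).const_mul
      M).div_const (1 + ν)).congr_deriv ?_
    rw [add_sub_cancel_left]
    field_simp
  have hrem : ∀ t ≥ 0, HasDerivAt (fun t => g t - g 0 - t * g' 0) (g' t - g' 0) t :=
    fun t ht => ((hg t ht).sub_const (g 0)).sub (hasDerivAt_mul_const (g' 0))
  refine image_le_of_deriv_right_le_deriv_boundary (a := 0) ?_
    (fun t ht => (hrem t ht.1).hasDerivWithinAt) (by simp [h1ν])
    (HasDerivAt.continuousOn fun t _ => hB t) (fun t _ => (hB t).hasDerivWithinAt)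
    (fun t ht => hg' t ht.1) ⟨hs, le_rfl⟩
  exact HasDerivAt.continuousOn fun t ht => hrem t ht.1

theorem le_of_forall_mul_le_add_rpow_of_pos {a c K ν : ℝ} (hν : 0 < 1 + ν) (hc : 0 < c)
    (hK : 0 < K) (h : ∀ s ≥ 0, a * s ≤ c + K * s ^ (1 + ν)) :
    a ≤ 2 * K ^ (1 / (1 + ν)) * c ^ (ν / (1 + ν)) := by
  -- the `s` with `K s^(1+ν) = c`, which balances the two terms on the right
  set s := (c / K) ^ (1 / (1 + ν)) with hs
  have hs0 : 0 < s := by positivity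
  have hKs : K * s ^ (1 + ν) = c := by
    rw [hs, ← Real.rpow_mul (by positivity), one_div_mul_cancel hν.ne', Real.rpow_one]
    field_simp
  have hcs : c / s = K ^ (1 / (1 + ν)) * c ^ (ν / (1 + ν)) := by
    rw [hs, Real.div_rpow hc.le hK.le, show ν / (1 + ν) = 1 - 1 / (1 + ν) by field_simp; ring,
      Real.rpow_sub hc, Real.rpow_one]
    field_simp
  have hsc : a * s ≤ 2 * c := by linarith [h s hs0.le]
  rw [mul_assoc, ← hcs, mul_div_assoc', le_div_iff₀ hs0]
  exact hsc

theorem le_of_forall_mul_le_add_rpow {a c K ν : ℝ} (hν : 0 ≤ ν) (hc : 0 ≤ c) (hK : 0 ≤ K)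
    (h : ∀ s ≥ 0, a * s ≤ c + K * s ^ (1 + ν)) :
    a ≤ 2 * K ^ (1 / (1 + ν)) * c ^ (ν / (1 + ν)) := by
  -- apply the positive case to `c + ε`, `K + ε` and let `ε → 0⁺`
  have hbound : Continuous fun ε : ℝ => 2 * (K + ε) ^ (1 / (1 + ν)) * (c + ε) ^ (ν / (1 + ν)) :=
    by fun_prop (disch := positivity)
  have hlim : Tendsto (fun ε : ℝ => 2 * (K + ε) ^ (1 / (1 + ν)) * (c + ε) ^ (ν / (1 + ν)))
      (𝓝[>] 0) (𝓝 (2 * K ^ (1 / (1 + ν)) * c ^ (ν / (1 + ν)))) := by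
    simpa using (hbound.tendsto 0).mono_left nhdsWithin_le_nhds
  refine ge_of_tendsto hlim (eventually_mem_nhdsWithin.mono fun ε hε => ?_)
  have hε : 0 < ε := hε
  refine le_of_forall_mul_le_add_rpow_of_pos (by positivity) (by positivity) (by positivity)
    fun s hs => (h s hs).trans ?_
  have : 0 ≤ s ^ (1 + ν) := by positivity
  nlinarith

theorem neg_le_of_nonneg_of_deriv_sub_le_rpow {g g' : ℝ → ℝ} {M ν : ℝ} (hν : 0 ≤ ν) (hM : 0 ≤ M)
    (hg : ∀ t ≥ 0, HasDerivAt g (g' t) t) (hg' : ∀ t ≥ 0, g' t - g' 0 ≤ M * t ^ ν)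
    (hg0 : ∀ t ≥ 0, 0 ≤ g t) :
    -g' 0 ≤ 2 * (M / (1 + ν)) ^ (1 / (1 + ν)) * g 0 ^ (ν / (1 + ν)) := by
  refine le_of_forall_mul_le_add_rpow hν (hg0 0 le_rfl) (by positivity) fun s hs => ?_
  have := sub_sub_mul_le_of_deriv_sub_le_rpow hν hg hg' hs
  have := hg0 s hs
  rw [mul_div_right_comm] at *
  linarith

section

variable {E F : Type*} [NormedAddCommGroup E] [NormedSpace ℝ E] [NormedAddCommGroup F]
  [NormedSpace ℝ F]

theorem HasFDerivAt.hasDerivAt_comp_add_smul {φ : E → F} {φ' : E →L[ℝ] F} {x v : E} {t : ℝ}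
    (hφ : HasFDerivAt φ φ' (x + t • v)) : HasDerivAt (fun t : ℝ => φ (x + t • v)) (φ' v) t := by
  have := hφ.comp_hasDerivAt t (((hasDerivAt_id t).smul_const v).const_add x)
  rwa [one_smul] at this

theorem ConvexOn.iteratedFDeriv_two_nonneg {f : E → ℝ} (hconv : ConvexOn ℝ univ f)
    (hf : ContDiff ℝ 2 f) (x v : E) : 0 ≤ iteratedFDeriv ℝ 2 f x ![v, v] := by
  have hf1 : Differentiable ℝ f := hf.differentiable (by norm_num)
  have hf2 : Differentiable ℝ (fderiv ℝ f) :=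
    (hf.fderiv_right (m := 1) le_rfl).differentiable one_ne_zero
  have hline : ConvexOn ℝ univ fun t : ℝ => f (x + t • v) := by
    simpa [Function.comp_def] using
      (hconv.translate_right x).comp_linearMap (LinearMap.toSpanSingleton ℝ E v)
  have hslope (t : ℝ) : HasDerivAt (fun t : ℝ => f (x + t • v)) (fderiv ℝ f (x + t • v) v) t :=
    (hf1 _).hasFDerivAt.hasDerivAt_comp_add_smul
  have hmono : Monotone fun t : ℝ => fderiv ℝ f (x + t • v) v := by
    have := hline.monotoneOn_deriv fun t _ => (hslope t).differentiableAt
    rwa [monotoneOn_univ, funext fun t => (hslope t).deriv] at this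
  have hderiv :
      HasDerivAt (fun t : ℝ => fderiv ℝ f (x + t • v) v) (fderiv ℝ (fderiv ℝ f) x v v) 0 := by
    simpa using ((hf2 (x + (0:ℝ) • v)).hasFDerivAt.hasDerivAt_comp_add_smul).clm_apply
      (hasDerivAt_const (0:ℝ) v)
  rw [iteratedFDeriv_two_apply]
  exact hderiv.nonneg_of_monotone hmono

theorem neg_fderiv_apply_le_of_nonneg_of_holder {φ : E → ℝ} {x : E} {M ν : ℝ} (hν : 0 ≤ ν)
    (hM : 0 ≤ M) (hφ : Differentiable ℝ φ) (hφ0 : ∀ y, 0 ≤ φ y)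
    (hHolder : ∀ y, ‖fderiv ℝ φ y - fderiv ℝ φ x‖ ≤ M * ‖y - x‖ ^ ν) (v : E) :
    -fderiv ℝ φ x v ≤ 2 * (M / (1 + ν)) ^ (1 / (1 + ν)) * φ x ^ (ν / (1 + ν)) * ‖v‖ := by
  have hslope (t : ℝ) : HasDerivAt (fun t : ℝ => φ (x + t • v)) (fderiv ℝ φ (x + t • v) v) t :=
    (hφ _).hasFDerivAt.hasDerivAt_comp_add_smul
  have hslope_holder : ∀ t ≥ 0, fderiv ℝ φ (x + t • v) v - fderiv ℝ φ (x + (0 : ℝ) • v) v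
      ≤ M * ‖v‖ ^ (1 + ν) * t ^ ν := fun t ht =>
    calc _ = (fderiv ℝ φ (x + t • v) - fderiv ℝ φ x) v := by simp
      _ ≤ ‖fderiv ℝ φ (x + t • v) - fderiv ℝ φ x‖ * ‖v‖ :=
        (Real.le_norm_self _).trans (ContinuousLinearMap.le_opNorm _ _)
      _ ≤ M * ‖t • v‖ ^ ν * ‖v‖ := by gcongr; simpa using hHolder (x + t • v)
      _ = M * ‖v‖ ^ (1 + ν) * t ^ ν := by
        rw [norm_smul, Real.norm_of_nonneg ht, Real.mul_rpow ht (norm_nonneg v),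
          Real.rpow_one_add' (norm_nonneg v) (by positivity)]
        ring
  have h := neg_le_of_nonneg_of_deriv_sub_le_rpow hν (by positivity) (fun t _ => hslope t)
    hslope_holder (fun t _ => hφ0 _)
  have hscale : (M * ‖v‖ ^ (1 + ν) / (1 + ν)) ^ (1 / (1 + ν))
      = (M / (1 + ν)) ^ (1 / (1 + ν)) * ‖v‖ := by
    rw [mul_div_right_comm, Real.mul_rpow (by positivity) (by positivity), one_div,
      Real.rpow_rpow_inv (norm_nonneg v) (by positivity)]
  simp only [zero_smul, add_zero, hscale] at h
  linarith

theorem norm_fderiv_le_of_nonneg_of_holder {φ : E → ℝ} {x : E} {M ν : ℝ} (hν : 0 ≤ ν)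
    (hM : 0 ≤ M) (hφ : Differentiable ℝ φ) (hφ0 : ∀ y, 0 ≤ φ y)
    (hHolder : ∀ y, ‖fderiv ℝ φ y - fderiv ℝ φ x‖ ≤ M * ‖y - x‖ ^ ν) :
    ‖fderiv ℝ φ x‖ ≤ 2 * (M / (1 + ν)) ^ (1 / (1 + ν)) * φ x ^ (ν / (1 + ν)) := by
  refine ContinuousLinearMap.opNorm_le_bound _ (by have := hφ0 x; positivity) fun v => ?_
  have hv := neg_fderiv_apply_le_of_nonneg_of_holder hν hM hφ hφ0 hHolder v
  have hnv := neg_fderiv_apply_le_of_nonneg_of_holder hν hM hφ hφ0 hHolder (-v)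
  rw [map_neg, neg_neg, norm_neg] at hnv
  rw [Real.norm_eq_abs, abs_le]
  constructor <;> linarith

theorem iteratedFDeriv_two_apply_swap {f : E → F} {x : E} (hf : ContDiffAt ℝ 2 f x) (a b : E) :
    iteratedFDeriv ℝ 2 f x ![a, b] = iteratedFDeriv ℝ 2 f x ![b, a] := by
  simpa [iteratedFDeriv_two_apply] using hf.isSymmSndFDerivAt (by simp) a b

theorem fderiv_iteratedFDeriv_apply {f : E → F} {x : E} {n : ℕ}
    (hf : DifferentiableAt ℝ (iteratedFDeriv ℝ n f) x) (m : Fin n → E) (v : E) :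
    fderiv ℝ (fun y => iteratedFDeriv ℝ n f y m) x v
      = iteratedFDeriv ℝ (n + 1) f x (Fin.cons v m) := by
  rw [fderiv_continuousMultilinear_apply_const_apply hf, iteratedFDeriv_succ_apply_left,
    Fin.cons_zero, Fin.tail_cons]

theorem iteratedFDeriv_three_apply_swap_left {f : E → F} (hf : ContDiff ℝ 3 f) (x a b c : E) :
    iteratedFDeriv ℝ 3 f x ![a, b, c] = iteratedFDeriv ℝ 3 f x ![b, a, c] := by
  have hf' : ContDiffAt ℝ 2 (fderiv ℝ f) x := (hf.fderiv_right (m := 2) le_rfl).contDiffAt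
  have hcurry (v w : E) :
      iteratedFDeriv ℝ 3 f x ![v, w, c] = iteratedFDeriv ℝ 2 (fderiv ℝ f) x ![v, w] c := by
    rw [iteratedFDeriv_succ_apply_right]
    congr 2
    ext i
    fin_cases i <;> rfl
  rw [hcurry, hcurry, iteratedFDeriv_two_apply_swap hf']

theorem iteratedFDeriv_three_apply_swap_right {f : E → F} (hf : ContDiff ℝ 3 f) (x a b c : E) :
    iteratedFDeriv ℝ 3 f x ![a, b, c] = iteratedFDeriv ℝ 3 f x ![a, c, b] := by
  have hd : DifferentiableAt ℝ (iteratedFDeriv ℝ 2 f) x :=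
    hf.differentiable_iteratedFDeriv (by norm_num) x
  have hsymm :
      (fun y => iteratedFDeriv ℝ 2 f y ![b, c]) = fun y => iteratedFDeriv ℝ 2 f y ![c, b] :=
    funext fun y => iteratedFDeriv_two_apply_swap (hf.contDiffAt.of_le (by norm_num)) b c
  show iteratedFDeriv ℝ (2 + 1) f x (Fin.cons a ![b, c])
    = iteratedFDeriv ℝ (2 + 1) f x (Fin.cons a ![c, b])
  rw [← fderiv_iteratedFDeriv_apply hd, ← fderiv_iteratedFDeriv_apply hd, hsymm]

end

theorem holder_third_derivative_bound_general {n : ℕ}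
    (f : EuclideanSpace ℝ (Fin n) → ℝ) (hf : ContDiff ℝ 3 f)
    (hconv : ConvexOn ℝ Set.univ f)
    (L ν : ℝ) (hL : 0 < L) (hν0 : 0 ≤ ν)
    (hHolder : ∀ x y : EuclideanSpace ℝ (Fin n),
      ‖iteratedFDeriv ℝ 3 f x - iteratedFDeriv ℝ 3 f y‖ ≤ L * ‖x - y‖ ^ ν) :
    ∀ x h u : EuclideanSpace ℝ (Fin n),
      |iteratedFDeriv ℝ 3 f x ![h, h, u]|
        ≤ 2 * (L / (1 + ν)) ^ (1 / (1 + ν)) *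
            (iteratedFDeriv ℝ 2 f x ![h, h]) ^ (ν / (1 + ν)) *
            ‖h‖ ^ (2 / (1 + ν)) * ‖u‖ := by
  intro x h u
  set φ := fun y => iteratedFDeriv ℝ 2 f y ![h, h]
  have hd : Differentiable ℝ (iteratedFDeriv ℝ 2 f) :=
    hf.differentiable_iteratedFDeriv (by norm_num)
  have hDφ (y v) : fderiv ℝ φ y v = iteratedFDeriv ℝ 3 f y ![v, h, h] :=
    fderiv_iteratedFDeriv_apply (hd y) _ v
  have hφ_holder (y) : ‖fderiv ℝ φ y - fderiv ℝ φ x‖ ≤ L * ‖h‖ ^ 2 * ‖y - x‖ ^ ν := by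
    refine ContinuousLinearMap.opNorm_le_bound _ (by positivity) fun v => ?_
    calc ‖(fderiv ℝ φ y - fderiv ℝ φ x) v‖
        = ‖(iteratedFDeriv ℝ 3 f y - iteratedFDeriv ℝ 3 f x) ![v, h, h]‖ := by simp [hDφ]
      _ ≤ ‖iteratedFDeriv ℝ 3 f y - iteratedFDeriv ℝ 3 f x‖ * (‖v‖ * ‖h‖ * ‖h‖) := by
        simpa [Fin.prod_univ_three] using
          (iteratedFDeriv ℝ 3 f y - iteratedFDeriv ℝ 3 f x).le_opNorm ![v, h, h]
      _ ≤ L * ‖y - x‖ ^ ν * (‖v‖ * ‖h‖ * ‖h‖) := by gcongr; exact hHolder y x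
      _ = L * ‖h‖ ^ 2 * ‖y - x‖ ^ ν * ‖v‖ := by ring
  have hscale : (L * ‖h‖ ^ 2 / (1 + ν)) ^ (1 / (1 + ν))
      = (L / (1 + ν)) ^ (1 / (1 + ν)) * ‖h‖ ^ (2 / (1 + ν)) := by
    rw [mul_div_right_comm, Real.mul_rpow (by positivity) (by positivity),
      ← Real.rpow_natCast_mul (norm_nonneg h), Nat.cast_ofNat, mul_one_div]
  calc |iteratedFDeriv ℝ 3 f x ![h, h, u]| = ‖fderiv ℝ φ x u‖ := by
        rw [iteratedFDeriv_three_apply_swap_right hf, iteratedFDeriv_three_apply_swap_left hf,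
          hDφ, Real.norm_eq_abs]
    _ ≤ ‖fderiv ℝ φ x‖ * ‖u‖ := (fderiv ℝ φ x).le_opNorm u
    _ ≤ 2 * (L * ‖h‖ ^ 2 / (1 + ν)) ^ (1 / (1 + ν)) * φ x ^ (ν / (1 + ν)) * ‖u‖ := by
        gcongr
        exact norm_fderiv_le_of_nonneg_of_holder hν0 (by positivity)
          (hd.continuousMultilinear_apply_const _)
          (fun y => hconv.iteratedFDeriv_two_nonneg (hf.of_le (by norm_num)) y h) hφ_holder
    _ = _ := by rw [hscale]; ring

theorem holder_third_derivative_bound {n : ℕ}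
    (f : EuclideanSpace ℝ (Fin n) → ℝ) (hf : ContDiff ℝ 3 f)
    (hconv : ConvexOn ℝ Set.univ f)
    (L ν : ℝ) (hL : 0 < L) (hν0 : 0 ≤ ν) (hν1 : ν ≤ 1)
    (hHolder : ∀ x y : EuclideanSpace ℝ (Fin n),
      ‖iteratedFDeriv ℝ 3 f x - iteratedFDeriv ℝ 3 f y‖ ≤ L * ‖x - y‖ ^ ν) :
    ∀ x h u : EuclideanSpace ℝ (Fin n),
      |iteratedFDeriv ℝ 3 f x ![h, h, u]|
        ≤ 2 * (L / (1 + ν)) ^ (1 / (1 + ν)) *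
            (iteratedFDeriv ℝ 2 f x ![h, h]) ^ (ν / (1 + ν)) *
            ‖h‖ ^ (2 / (1 + ν)) * ‖u‖ :=
  holder_third_derivative_bound_general f hf hconv L ν hL hν0 hHolder
end

section
/- Let f(x) = ∑_{i=1}^{d} ℓ(⟨a_i, x⟩ − b_i) where ℓ(t) = log(1 + eᵗ) is the logistic loss, and define the Fisher matrix H(x) := ∑_{i=1}^{d} ℓ′(⟨a_i,x⟩−b_i)² a_i a_iᵀ and the Gauss-Newton matrix B := ∑_{i=1}^{d} a_i a_iᵀ. Then the operator norm of ∇²f(x) − H(x) measured in the B-norm satisfies ‖∇²f(x) − H(x)‖ ≤ f(x), i.e., −f(x)·B ⪯ ∇²f(x) − H(x) ⪯ f(x)·B. -/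
/-!
The Hessian of `f` is `∑ ℓ″(tᵢ) aᵢaᵢᵀ` with `tᵢ = ⟨aᵢ,x⟩ - bᵢ`, so `∇²f(x) - H(x) = ∑ cᵢ aᵢaᵢᵀ`
with `cᵢ = ℓ″(tᵢ) - ℓ′(tᵢ)² = σ(1 - 2σ)` for `σ = ℓ′(tᵢ) ∈ (0,1)`. Hence `|cᵢ| ≤ σ ≤ ℓ(tᵢ)`, and
`∑ ℓ(tᵢ) ⟨aᵢ,h⟩² ≤ (∑ ℓ(tᵢ)) (∑ ⟨aᵢ,h⟩²) = f(x) ⟨Bh,h⟩` because every `ℓ(tᵢ)` is nonnegative.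
-/

open scoped RealInnerProductSpace

/-- The derivative of the logistic loss `ℓ(t) = log (1 + exp t)`. -/
noncomputable def logisticDeriv (t : ℝ) : ℝ := Real.exp t / (1 + Real.exp t)

section Logistic

open Real

lemma hasDerivAt_log_one_add_exp (t : ℝ) :
    HasDerivAt (fun t => log (1 + exp t)) (logisticDeriv t) t := by
  simpa [logisticDeriv] using ((hasDerivAt_exp t).const_add 1).log (by positivity)

lemma hasDerivAt_logisticDeriv (t : ℝ) :
    HasDerivAt logisticDeriv (logisticDeriv t * (1 - logisticDeriv t)) t := by
  refine ((hasDerivAt_exp t).fun_div ((hasDerivAt_exp t).const_add 1)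
    (by positivity)).congr_deriv ?_
  unfold logisticDeriv
  field_simp

lemma logisticDeriv_pos (t : ℝ) : 0 < logisticDeriv t := by
  unfold logisticDeriv; positivity

lemma logisticDeriv_lt_one (t : ℝ) : logisticDeriv t < 1 := by
  rw [logisticDeriv, div_lt_one (by positivity)]
  linarith

lemma logisticDeriv_le_log_one_add_exp (t : ℝ) : logisticDeriv t ≤ log (1 + exp t) := by
  have hinv : log (1 + exp t)⁻¹ ≤ (1 + exp t)⁻¹ - 1 := log_le_sub_one_of_pos (by positivity)
  have hσ : logisticDeriv t = 1 - (1 + exp t)⁻¹ := by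
    rw [logisticDeriv]; field_simp; ring
  rw [log_inv] at hinv
  linarith

lemma abs_logisticDeriv_mul_one_sub_sub_sq_le (t : ℝ) :
    |logisticDeriv t * (1 - logisticDeriv t) - logisticDeriv t ^ 2| ≤ log (1 + exp t) := by
  have hpos := logisticDeriv_pos t
  have hlt := logisticDeriv_lt_one t
  have hle := logisticDeriv_le_log_one_add_exp t
  rw [abs_le]
  constructor <;> nlinarith

end Logistic

section RidgeSum

variable {E : Type*} [NormedAddCommGroup E] [InnerProductSpace ℝ E]

lemma hasFDerivAt_inner_sub (v : E) (c : ℝ) (x : E) :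
    HasFDerivAt (fun y => ⟪v, y⟫ - c) (innerSL ℝ v) x :=
  (innerSL ℝ v).hasFDerivAt.sub_const c

variable {ι : Type*} [Fintype ι] (a : ι → E) (b : ι → ℝ) {g g' g'' : ℝ → ℝ}

lemma fderiv_sum_comp_inner_sub (hg : ∀ t, HasDerivAt g (g' t) t) :
    fderiv ℝ (fun x => ∑ i, g (⟪a i, x⟫ - b i)) =
      fun x => ∑ i, g' (⟪a i, x⟫ - b i) • innerSL ℝ (a i) :=
  funext fun x => (HasFDerivAt.fun_sum fun i _ =>
    (hg _).comp_hasFDerivAt x (hasFDerivAt_inner_sub (a i) (b i) x)).fderiv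

lemma iteratedFDeriv_two_sum_comp_inner_sub (hg : ∀ t, HasDerivAt g (g' t) t)
    (hg' : ∀ t, HasDerivAt g' (g'' t) t) (x h : E) :
    iteratedFDeriv ℝ 2 (fun x => ∑ i, g (⟪a i, x⟫ - b i)) x ![h, h] =
      ∑ i, g'' (⟪a i, x⟫ - b i) * ⟪a i, h⟫ ^ 2 := by
  have hderiv : HasFDerivAt (fun y => ∑ i, g' (⟪a i, y⟫ - b i) • innerSL ℝ (a i))
      (∑ i, (g'' (⟪a i, x⟫ - b i) • innerSL ℝ (a i)).smulRight (innerSL ℝ (a i))) x :=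
    HasFDerivAt.fun_sum fun i _ => ((hg' _).comp_hasFDerivAt x
      (hasFDerivAt_inner_sub (a i) (b i) x)).smul_const (innerSL ℝ (a i))
  rw [iteratedFDeriv_two_apply, fderiv_sum_comp_inner_sub a b hg, hderiv.fderiv]
  simp [pow_two, mul_assoc]

end RidgeSum

lemma abs_sum_mul_le_sum_mul_sum {ι : Type*} (s : Finset ι) {c l w : ι → ℝ}
    (hc : ∀ i ∈ s, |c i| ≤ l i) (hw : ∀ i ∈ s, 0 ≤ w i) :
    |∑ i ∈ s, c i * w i| ≤ (∑ i ∈ s, l i) * ∑ i ∈ s, w i := calc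
  |∑ i ∈ s, c i * w i| ≤ ∑ i ∈ s, l i * w i :=
    (Finset.abs_sum_le_sum_abs _ _).trans <| Finset.sum_le_sum fun i hi => by
      rw [abs_mul, abs_of_nonneg (hw i hi)]
      exact mul_le_mul_of_nonneg_right (hc i hi) (hw i hi)
  _ ≤ ∑ i ∈ s, l i * ∑ j ∈ s, w j := Finset.sum_le_sum fun i hi =>
    mul_le_mul_of_nonneg_left (Finset.single_le_sum hw hi) ((abs_nonneg _).trans (hc i hi))
  _ = (∑ i ∈ s, l i) * ∑ i ∈ s, w i := (Finset.sum_mul _ _ _).symm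

theorem logistic_fisher_hessian_approx_general {n d : ℕ}
    (a : Fin d → EuclideanSpace ℝ (Fin n)) (b : Fin d → ℝ)
    (f : EuclideanSpace ℝ (Fin n) → ℝ)
    (hf : f = fun x => ∑ i, Real.log (1 + Real.exp (⟪a i, x⟫ - b i))) :
    ∀ x h : EuclideanSpace ℝ (Fin n),
      |iteratedFDeriv ℝ 2 f x ![h, h] -
          ∑ i, logisticDeriv (⟪a i, x⟫ - b i) ^ 2 * ⟪a i, h⟫ ^ 2|
        ≤ f x * ∑ i, ⟪a i, h⟫ ^ 2 := by
  intro x h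
  subst hf
  rw [iteratedFDeriv_two_sum_comp_inner_sub a b hasDerivAt_log_one_add_exp
    hasDerivAt_logisticDeriv, ← Finset.sum_sub_distrib]
  simp_rw [← sub_mul]
  exact abs_sum_mul_le_sum_mul_sum _ (fun i _ => abs_logisticDeriv_mul_one_sub_sub_sq_le _)
    (fun i _ => sq_nonneg _)

/-- For logistic regression, the Fisher approximation `H(x) = ∑ ℓ′(⟨aᵢ,x⟩-bᵢ)² aᵢaᵢᵀ`
of the Hessian satisfies `-f(x)·B ⪯ ∇²f(x) - H(x) ⪯ f(x)·B`, where
`B = ∑ aᵢaᵢᵀ` is the Gauss-Newton matrix; equivalently, in quadratic-form language,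
`|⟨(∇²f(x) - H(x))h, h⟩| ≤ f(x)·⟨Bh, h⟩` for all `h`. -/
theorem logistic_fisher_hessian_approx {n d : ℕ}
    (a : Fin d → EuclideanSpace ℝ (Fin n)) (b : Fin d → ℝ)
    (f : EuclideanSpace ℝ (Fin n) → ℝ)
    (hf : f = fun x => ∑ i, Real.log (1 + Real.exp (⟪a i, x⟫ - b i)))
    (hBposdef : ∀ h : EuclideanSpace ℝ (Fin n), h ≠ 0 → 0 < ∑ i, ⟪a i, h⟫ ^ 2) :
    ∀ x h : EuclideanSpace ℝ (Fin n),
      |iteratedFDeriv ℝ 2 f x ![h, h] -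
          ∑ i, logisticDeriv (⟪a i, x⟫ - b i) ^ 2 * ⟪a i, h⟫ ^ 2|
        ≤ f x * ∑ i, ⟪a i, h⟫ ^ 2 :=
  logistic_fisher_hessian_approx_general a b f hf
end
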